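/- Let Φ be a positive linear map, A, B positive invertible operators, and 0 < t ≤ 1/2. Then Φ(A)♯_t Φ(B) - Φ(A♯_t B) ≤ 2R(Φ(A)♯Φ(B) - Φ(A♯B) + ½(Φ(A) + Φ(B) - 2Φ(A)♯Φ(B))), where R = max{t, 1-t}. -/

import Mathlib

open scoped NNReal



section Scalar

private lemma scalar_S1 {t : ℝ} (ht0 : 0 < t) (ht : t ≤ 1/2) (z : ℝ≥0) :
    z ^ (t:ℝ) ≤ (2*t).toNNReal * z ^ ((1:ℝ)/2) + (1-2*t).toNNReal := by
  have h1 : (0:ℝ) ≤ 2*t := by linarith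
  have h2 : (0:ℝ) ≤ 1-2*t := by linarith
  have hsum : (2*t).toNNReal + (1-2*t).toNNReal = 1 := by
    rw [← Real.toNNReal_add h1 h2]; norm_num
  have key := NNReal.geom_mean_le_arith_mean2_weighted (2*t).toNNReal (1-2*t).toNNReal
    (z ^ ((1:ℝ)/2)) 1 hsum
  rw [NNReal.one_rpow, mul_one, mul_one] at key
  calc z ^ (t:ℝ) = (z ^ ((1:ℝ)/2)) ^ (((2*t).toNNReal : ℝ)) := by
        rw [← NNReal.rpow_mul, Real.coe_toNNReal _ h1]; ring_nf
    _ ≤ _ := key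

private lemma scalar_S2 {t : ℝ} (ht0 : 0 < t) (ht : t ≤ 1/2) (z : ℝ≥0) :
    (2-2*t).toNNReal * z ^ ((1:ℝ)/2) ≤ z ^ (t:ℝ) + (1-2*t).toNNReal * z := by
  set r : ℝ := 2 - 2*t with hr
  have hr1 : (1:ℝ) ≤ r := by rw [hr]; linarith
  have hr0 : (0:ℝ) < r := by linarith
  have hw1 : (0:ℝ) ≤ 1/r := by positivity
  have hw2 : (0:ℝ) ≤ 1 - 1/r := by
    have : 1/r ≤ 1 := by rw [div_le_one hr0]; linarith
    linarith
  have hsum : (1/r).toNNReal + (1-1/r).toNNReal = 1 := by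
    rw [← Real.toNNReal_add hw1 hw2]; norm_num
  have key := NNReal.geom_mean_le_arith_mean2_weighted (1/r).toNNReal (1-1/r).toNNReal
    (z ^ (t:ℝ)) z hsum
  have hexp2 : t * (1/r) + (1 - 1/r) = 1/2 := by
    rw [hr]
    have hne1 : (1:ℝ) - t ≠ 0 := ne_of_gt (by linarith)
    have hne2 : (2:ℝ) - 2*t ≠ 0 := ne_of_gt (by linarith)
    field_simp
    ring
  have hexp : (z ^ (t:ℝ)) ^ (((1/r).toNNReal : ℝ)) * z ^ (((1-1/r).toNNReal : ℝ))
      = z ^ ((1:ℝ)/2) := by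
    rw [Real.coe_toNNReal _ hw1, Real.coe_toNNReal _ hw2, ← NNReal.rpow_mul,
      ← NNReal.rpow_of_add_eq z (by norm_num) hexp2]
  rw [hexp] at key
  have hmul := mul_le_mul_right key r.toNNReal
  have e1 : r.toNNReal * (1/r).toNNReal = 1 := by
    rw [← Real.toNNReal_mul hr0.le, mul_one_div, div_self hr0.ne', Real.toNNReal_one]
  have e2 : r.toNNReal * (1-1/r).toNNReal = (1-2*t).toNNReal := by
    rw [← Real.toNNReal_mul hr0.le]
    congr 1
    field_simp
    linarith
  calc (2-2*t).toNNReal * z ^ ((1:ℝ)/2) = r.toNNReal * z ^ ((1:ℝ)/2) := rfl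
    _ ≤ r.toNNReal * ((1/r).toNNReal * z ^ (t:ℝ) + (1-1/r).toNNReal * z) := hmul
    _ = z ^ (t:ℝ) + (1-2*t).toNNReal * z := by
        rw [mul_add, ← mul_assoc, ← mul_assoc, e1, e2, one_mul]

private lemma scalar_S3 (z : ℝ≥0) : 2 * z ^ ((1:ℝ)/2) ≤ 1 + z := by
  have hsum : (1/2 : ℝ≥0) + 1/2 = 1 := by
    rw [← NNReal.coe_inj]; push_cast; norm_num
  have key := NNReal.geom_mean_le_arith_mean2_weighted (1/2) (1/2) z 1 hsum
  rw [NNReal.one_rpow, mul_one, mul_one] at key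
  have h2 : z ^ ((1:ℝ)/2) = z ^ (((1/2 : ℝ≥0)) : ℝ) := by norm_num
  rw [h2]
  calc 2 * z ^ (((1/2:ℝ≥0)):ℝ) ≤ 2 * ((1/2 : ℝ≥0) * z + 1/2) := mul_le_mul_right key 2
    _ = 1 + z := by rw [← NNReal.coe_inj]; push_cast; ring

end Scalar

section Op

variable {C : Type*} [CStarAlgebra C] [PartialOrder C] [StarOrderedRing C]

private lemma nnsmul_eq_rsmul (c : ℝ≥0) (x : C) : c • x = ((c:ℝ)) • x := by
  rw [NNReal.smul_def]

private lemma op_S1 {t : ℝ} (ht0 : 0 < t) (ht : t ≤ 1/2) {w : C} (hw : 0 ≤ w) :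
    w ^ (t:ℝ) ≤ (2*t) • w ^ ((1:ℝ)/2) + (1-2*t) • (1:C) := by
  have hc1 : ContinuousOn (fun z : ℝ≥0 => z ^ (t:ℝ)) (spectrum ℝ≥0 w) :=
    (NNReal.continuous_rpow_const ht0.le).continuousOn
  have hc2 : ContinuousOn (fun z : ℝ≥0 => z ^ ((1:ℝ)/2)) (spectrum ℝ≥0 w) :=
    (NNReal.continuous_rpow_const (by norm_num)).continuousOn
  have hc3 : ContinuousOn (fun z : ℝ≥0 =>
      (2*t).toNNReal * z ^ ((1:ℝ)/2) + (1-2*t).toNNReal) (spectrum ℝ≥0 w) :=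
    ((continuousOn_const.mul hc2).add continuousOn_const)
  have key : cfc (fun z : ℝ≥0 => z ^ (t:ℝ)) w ≤
      cfc (fun z : ℝ≥0 => (2*t).toNNReal * z ^ ((1:ℝ)/2) + (1-2*t).toNNReal) w :=
    cfc_mono (fun z _ => scalar_S1 ht0 ht z) hc1 hc3
  have hsplit : cfc (fun z : ℝ≥0 => (2*t).toNNReal * z ^ ((1:ℝ)/2) + (1-2*t).toNNReal) w
      = (2*t) • w ^ ((1:ℝ)/2) + (1-2*t) • (1:C) := by
    rw [cfc_add w (fun z : ℝ≥0 => (2*t).toNNReal * z ^ ((1:ℝ)/2)) (fun _ : ℝ≥0 => (1-2*t).toNNReal)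
        (by exact continuousOn_const.mul hc2) continuousOn_const,
      cfc_const_mul _ _ w hc2, cfc_const _ w hw,
      Algebra.algebraMap_eq_smul_one, nnsmul_eq_rsmul, nnsmul_eq_rsmul,
      Real.coe_toNNReal _ (by linarith : (0:ℝ) ≤ 2*t),
      Real.coe_toNNReal _ (by linarith : (0:ℝ) ≤ 1-2*t)]
    rfl
  rw [← hsplit]
  exact key

private lemma op_S2 {t : ℝ} (ht0 : 0 < t) (ht : t ≤ 1/2) {w : C} (hw : 0 ≤ w) :
    (2-2*t) • w ^ ((1:ℝ)/2) ≤ w ^ (t:ℝ) + (1-2*t) • w := by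
  have hc1 : ContinuousOn (fun z : ℝ≥0 => z ^ (t:ℝ)) (spectrum ℝ≥0 w) :=
    (NNReal.continuous_rpow_const ht0.le).continuousOn
  have hc2 : ContinuousOn (fun z : ℝ≥0 => z ^ ((1:ℝ)/2)) (spectrum ℝ≥0 w) :=
    (NNReal.continuous_rpow_const (by norm_num)).continuousOn
  have key : cfc (fun z : ℝ≥0 => (2-2*t).toNNReal * z ^ ((1:ℝ)/2)) w ≤
      cfc (fun z : ℝ≥0 => z ^ (t:ℝ) + (1-2*t).toNNReal * z) w :=
    cfc_mono (fun z _ => scalar_S2 ht0 ht z) (continuousOn_const.mul hc2)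
      (hc1.add (continuousOn_const.mul continuousOn_id))
  have h1 : cfc (fun z : ℝ≥0 => (2-2*t).toNNReal * z ^ ((1:ℝ)/2)) w
      = (2-2*t) • w ^ ((1:ℝ)/2) := by
    rw [cfc_const_mul _ _ w hc2, nnsmul_eq_rsmul,
      Real.coe_toNNReal _ (by linarith : (0:ℝ) ≤ 2-2*t)]
    rfl
  have h2 : cfc (fun z : ℝ≥0 => z ^ (t:ℝ) + (1-2*t).toNNReal * z) w
      = w ^ (t:ℝ) + (1-2*t) • w := by
    rw [cfc_add w (fun z : ℝ≥0 => z ^ (t:ℝ)) (fun z : ℝ≥0 => (1-2*t).toNNReal * z) hc1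
        (by exact continuousOn_const.mul continuousOn_id),
      cfc_const_mul _ (fun z : ℝ≥0 => z) w (by exact continuousOn_id), cfc_id' ℝ≥0 w,
      nnsmul_eq_rsmul,
      Real.coe_toNNReal _ (by linarith : (0:ℝ) ≤ 1-2*t)]
    rfl
  rw [h1, h2] at key
  exact key

private lemma op_S3 {w : C} (hw : 0 ≤ w) :
    (2:ℝ) • w ^ ((1:ℝ)/2) ≤ 1 + w := by
  have hc2 : ContinuousOn (fun z : ℝ≥0 => z ^ ((1:ℝ)/2)) (spectrum ℝ≥0 w) :=
    (NNReal.continuous_rpow_const (by norm_num)).continuousOn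
  have key : cfc (fun z : ℝ≥0 => 2 * z ^ ((1:ℝ)/2)) w ≤
      cfc (fun z : ℝ≥0 => 1 + z) w :=
    cfc_mono (fun z _ => scalar_S3 z) (continuousOn_const.mul hc2)
      (continuousOn_const.add continuousOn_id)
  have h1 : cfc (fun z : ℝ≥0 => 2 * z ^ ((1:ℝ)/2)) w = (2:ℝ) • w ^ ((1:ℝ)/2) := by
    rw [cfc_const_mul _ _ w hc2, nnsmul_eq_rsmul]
    norm_num
    rfl
  have h2 : cfc (fun z : ℝ≥0 => 1 + z) w = 1 + w := by
    rw [cfc_add w (fun _ : ℝ≥0 => 1) (fun z : ℝ≥0 => z) continuousOn_const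
        (by exact continuousOn_id), cfc_const 1 w hw, cfc_id' ℝ≥0 w, map_one]
  rw [h1, h2] at key
  exact key

private lemma conj_le {x y : C} (h : x ≤ y) {s : C} (hs : 0 ≤ s) :
    s * x * s ≤ s * y * s := by
  simpa [(IsSelfAdjoint.of_nonneg hs).star_eq] using star_left_conjugate_le_conjugate h s

/-- Key lemma: compression of `v` by the "support-ish" conjugation coming from `u` is `≤ v`,
provided `v ≤ c • u`. -/
private lemma compress_le {u v : C} (hu : 0 ≤ u) (hv : 0 ≤ v) {c : ℝ} (hc : 0 ≤ c)
    (hvc : v ≤ c • u) :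
    u ^ ((1:ℝ)/2) * (u ^ (-(1:ℝ)/2) * v * u ^ (-(1:ℝ)/2)) * u ^ ((1:ℝ)/2) ≤ v := by
  set f : ℝ≥0 → ℝ≥0 := fun z => z ^ ((1:ℝ)/2) with hf
  set g : ℝ≥0 → ℝ≥0 := fun z => z ^ (-(1:ℝ)/2) with hg
  have hfc : ContinuousOn f (spectrum ℝ≥0 u) :=
    (NNReal.continuous_rpow_const (by norm_num)).continuousOn
  by_cases hgc : ContinuousOn g (spectrum ℝ≥0 u)
  case neg =>
    have hzero : u ^ (-(1:ℝ)/2) = 0 := by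
      show cfc g u = 0
      exact cfc_apply_of_not_continuousOn u hgc
    rw [hzero]
    simpa using hv
  case pos =>
    have hsu : u ^ ((1:ℝ)/2) = cfc f u := rfl
    have hdu : u ^ (-(1:ℝ)/2) = cfc g u := rfl
    have hq1 : cfc f u * cfc g u = cfc (fun z => f z * g z) u := (cfc_mul f g u hfc hgc).symm
    have hq2 : cfc g u * cfc f u = cfc (fun z => f z * g z) u := by
      rw [(cfc_mul g f u hgc hfc).symm]
      exact cfc_congr fun z _ => mul_comm _ _
    set q : C := cfc (fun z => f z * g z) u with hqdef
    have hq0 : (0:C) ≤ q := cfc_predicate _ u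
    have hqsa : IsSelfAdjoint q := IsSelfAdjoint.of_nonneg hq0
    have husa : IsSelfAdjoint u := IsSelfAdjoint.of_nonneg hu
    have hvsa : IsSelfAdjoint v := IsSelfAdjoint.of_nonneg hv
    have hqu : q * u = u := by
      calc q * u = cfc (fun z => f z * g z) u * cfc id u := by rw [cfc_id ℝ≥0 u hu]
        _ = cfc (fun z => (f z * g z) * id z) u :=
            (cfc_mul _ _ u (hfc.mul hgc) continuousOn_id).symm
        _ = cfc id u := by
            refine cfc_congr fun z _ => ?_
            by_cases hz : z = 0
            · simp [hz, hf, hg]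
            · have h1 : f z * g z = 1 := by
                rw [hf, hg]
                simp only
                rw [← NNReal.rpow_add hz]
                norm_num
              simp [h1]
        _ = u := cfc_id ℝ≥0 u hu
    have huq : u * q = u := by
      have := congrArg star hqu
      rwa [star_mul, hqsa.star_eq, husa.star_eq] at this
    set e : C := 1 - q with hedef
    have hesa : IsSelfAdjoint e := (IsSelfAdjoint.one C).sub hqsa
    have heu : e * u = 0 := by rw [hedef, sub_mul, one_mul, hqu, sub_self]
    have heve : e * v * e = 0 := by
      have hle : e * v * e ≤ e * (c • u) * e := by
        have := star_left_conjugate_le_conjugate hvc e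
        rwa [hesa.star_eq] at this
      have heq : e * (c • u) * e = 0 := by
        rw [mul_smul_comm, smul_mul_assoc, heu, zero_mul, smul_zero]
      have hge : (0:C) ≤ e * v * e := by
        have := star_left_conjugate_nonneg hv e
        rwa [hesa.star_eq] at this
      exact le_antisymm (hle.trans_eq heq) hge
    have hve : v * e = 0 := by
      set r : C := CFC.sqrt v with hrdef
      have hr0 : (0:C) ≤ r := CFC.sqrt_nonneg v
      have hrsa : IsSelfAdjoint r := IsSelfAdjoint.of_nonneg hr0
      have hrr : r * r = v := CFC.sqrt_mul_sqrt_self v hv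
      have hre : r * e = 0 := by
        rw [← CStarRing.star_mul_self_eq_zero_iff (r * e)]
        rw [star_mul, hrsa.star_eq, hesa.star_eq]
        calc e * r * (r * e) = e * (r * r) * e := by noncomm_ring
          _ = e * v * e := by rw [hrr]
          _ = 0 := heve
      calc v * e = r * (r * e) := by rw [← hrr]; noncomm_ring
        _ = 0 := by rw [hre, mul_zero]
    have hvq : v * q = v := by
      have : v * (1 - q) = 0 := hve
      rw [mul_sub, mul_one, sub_eq_zero] at this
      exact this.symm
    have hqv : q * v = v := by
      have := congrArg star hvq
      rwa [star_mul, hqsa.star_eq, hvsa.star_eq] at this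
    calc u ^ ((1:ℝ)/2) * (u ^ (-(1:ℝ)/2) * v * u ^ (-(1:ℝ)/2)) * u ^ ((1:ℝ)/2)
        = (cfc f u * cfc g u) * v * (cfc g u * cfc f u) := by
          rw [hsu, hdu]; noncomm_ring
      _ = q * v * q := by rw [hq1, hq2]
      _ = v := by rw [hqv, hvq]
      _ ≤ v := le_rfl

end Op


private lemma conj_smul {C : Type*} [CStarAlgebra C] (s x : C) (c : ℝ) :
    s * (c • x) * s = c • (s * x * s) := by
  rw [mul_smul_comm, smul_mul_assoc]


variable {A : Type*} [CStarAlgebra A] [PartialOrder A] [StarOrderedRing A]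
variable {B : Type*} [CStarAlgebra B] [PartialOrder B] [StarOrderedRing B]

/-- The `s`-weighted geometric mean `a ♯ₛ b = a^{1/2} (a^{-1/2} b a^{-1/2})^s a^{1/2}`,
with real powers given by the continuous functional calculus. -/
noncomputable def geomMean {A : Type*} [CStarAlgebra A] [PartialOrder A] [StarOrderedRing A]
    (a b : A) (s : ℝ) : A :=
  a ^ ((1 : ℝ) / 2) * (a ^ (-(1 : ℝ) / 2) * b * a ^ (-(1 : ℝ) / 2)) ^ s * a ^ ((1 : ℝ) / 2)

/-- Simplified reverse of Ando's inequality for a positive linear map, `0 < t ≤ 1/2`. -/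
theorem reverse_ando_simplified (Φ : A →ₗ[ℂ] B) (hΦ : ∀ x : A, 0 ≤ x → 0 ≤ Φ x)
    (a b : A) (ha : 0 ≤ a) (ha' : IsUnit a) (hb : 0 ≤ b) (hb' : IsUnit b)
    (t : ℝ) (ht0 : 0 < t) (ht : t ≤ 1 / 2) :
    geomMean (Φ a) (Φ b) t - Φ (geomMean a b t)
      ≤ (2 * max t (1 - t)) •
          (geomMean (Φ a) (Φ b) (1 / 2) - Φ (geomMean a b (1 / 2))
            + ((1 : ℝ) / 2) • (Φ a + Φ b - (2 : ℝ) • geomMean (Φ a) (Φ b) (1 / 2))) := by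
  have hmax : max t (1 - t) = 1 - t := max_eq_right (by linarith)
  have hu : (0:B) ≤ Φ a := hΦ a ha
  have hv : (0:B) ≤ Φ b := hΦ b hb
  have hmono : ∀ {x y : A}, x ≤ y → Φ x ≤ Φ y := by
    intro x y h
    have h0 := hΦ _ (sub_nonneg.mpr h)
    rw [map_sub] at h0
    exact sub_nonneg.mp h0
  have hsmulR : ∀ (c : ℝ) (x : A), Φ (c • x) = c • Φ x := fun c x => by
    rw [← algebraMap_smul ℂ c x, map_smul, algebraMap_smul]
  -- A-side
  have hza : 0 ∉ spectrum ℝ≥0 a := spectrum.zero_notMem ℝ≥0 ha'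
  set sa : A := a ^ ((1:ℝ)/2) with hsa_def
  set da : A := a ^ (-(1:ℝ)/2) with hda_def
  have hsa0 : (0:A) ≤ sa := CFC.rpow_nonneg
  have hsada : sa * da = 1 := by
    rw [hsa_def, hda_def, ← CFC.rpow_add ha',
      show (1:ℝ)/2 + (-(1:ℝ)/2) = 0 by ring, CFC.rpow_zero a ha]
  have hdasa : da * sa = 1 := by
    rw [hsa_def, hda_def, ← CFC.rpow_add ha',
      show (-(1:ℝ)/2) + (1:ℝ)/2 = 0 by ring, CFC.rpow_zero a ha]
  have hsasa : sa * sa = a := by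
    rw [hsa_def, ← CFC.sqrt_eq_rpow, CFC.sqrt_mul_sqrt_self a ha]
  set X : A := da * b * da with hX_def
  have hXnn : (0:A) ≤ X := conjugate_nonneg_of_nonneg hb CFC.rpow_nonneg
  have hconjX : sa * X * sa = b := by
    calc sa * (da * b * da) * sa = (sa * da) * b * (da * sa) := by noncomm_ring
      _ = b := by rw [hsada, hdasa, one_mul, mul_one]
  -- step h2 : (2-2t) • Φ (a♯b) ≤ Φ (a♯ₜb) + (1-2t) • Φ b
  have h2 : (2-2*t) • Φ (geomMean a b (1/2)) ≤ Φ (geomMean a b t) + (1-2*t) • Φ b := by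
    have hA := conj_le (op_S2 ht0 ht hXnn) hsa0
    have hl : sa * ((2-2*t) • X ^ ((1:ℝ)/2)) * sa = (2-2*t) • geomMean a b (1/2) := by
      rw [conj_smul]; rfl
    have hr : sa * (X ^ (t:ℝ) + (1-2*t) • X) * sa = geomMean a b t + (1-2*t) • b := by
      rw [mul_add, add_mul, conj_smul, hconjX]; rfl
    rw [hl, hr] at hA
    have := hmono hA
    rwa [hsmulR, map_add, hsmulR] at this
  -- b ≤ c • a
  set ai : A := (↑ha'.unit⁻¹ : A) with hai_def
  have hai0 : (0:A) ≤ ai := CFC.inv_nonneg_of_nonneg ha'.unit (by rwa [ha'.unit_spec])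
  have hsaai : sa * ai * sa = 1 := by
    have hinv : ai = a ^ (-1:ℝ) := by
      rw [hai_def, ← CFC.rpow_neg_one_eq_inv ha'.unit (by rwa [ha'.unit_spec]), ha'.unit_spec]
    rw [hinv, hsa_def, ← CFC.rpow_add ha', ← CFC.rpow_add ha',
      show (1:ℝ)/2 + (-1:ℝ) + (1:ℝ)/2 = 0 by ring, CFC.rpow_zero a ha]
  have hone_le : (1:A) ≤ ‖ai‖ • a := by
    have h1a : ai ≤ algebraMap ℝ A ‖ai‖ :=
      IsSelfAdjoint.le_algebraMap_norm_self (.of_nonneg hai0)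
    have := conj_le h1a hsa0
    rw [hsaai, Algebra.algebraMap_eq_smul_one, conj_smul, mul_one, hsasa] at this
    exact this
  have hba : b ≤ (‖b‖ * ‖ai‖) • a := by
    have hb1 : b ≤ ‖b‖ • (1:A) := by
      have := IsSelfAdjoint.le_algebraMap_norm_self (.of_nonneg hb)
      rwa [Algebra.algebraMap_eq_smul_one] at this
    calc b ≤ ‖b‖ • (1:A) := hb1
      _ ≤ ‖b‖ • (‖ai‖ • a) := smul_le_smul_of_nonneg_left hone_le (norm_nonneg b)
      _ = (‖b‖ * ‖ai‖) • a := by rw [smul_smul]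
  have hvc : Φ b ≤ (‖b‖ * ‖ai‖) • Φ a := by
    have := hmono hba
    rwa [hsmulR] at this
  -- B-side
  set su : B := (Φ a) ^ ((1:ℝ)/2) with hsu_def
  set du : B := (Φ a) ^ (-(1:ℝ)/2) with hdu_def
  have hsu0 : (0:B) ≤ su := CFC.rpow_nonneg
  have hsusu : su * su = Φ a := by
    rw [hsu_def, ← CFC.sqrt_eq_rpow, CFC.sqrt_mul_sqrt_self (Φ a) hu]
  set Y : B := du * Φ b * du with hY_def
  have hYnn : (0:B) ≤ Y := conjugate_nonneg_of_nonneg hv CFC.rpow_nonneg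
  have hcompress : su * Y * su ≤ Φ b :=
    compress_le hu hv (by positivity) hvc
  -- h1
  have h1 : geomMean (Φ a) (Φ b) t ≤ (2*t) • geomMean (Φ a) (Φ b) (1/2) + (1-2*t) • Φ a := by
    have hB1 := conj_le (op_S1 ht0 ht hYnn) hsu0
    have hr : su * ((2*t) • Y ^ ((1:ℝ)/2) + (1-2*t) • (1:B)) * su
        = (2*t) • geomMean (Φ a) (Φ b) (1/2) + (1-2*t) • Φ a := by
      rw [mul_add, add_mul, conj_smul, conj_smul, mul_one, hsusu]; rfl
    rw [hr] at hB1
    exact hB1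
  -- h3
  have h3 : (2:ℝ) • geomMean (Φ a) (Φ b) (1/2) ≤ Φ a + Φ b := by
    have hB3 := conj_le (op_S3 hYnn) hsu0
    have hl : su * ((2:ℝ) • Y ^ ((1:ℝ)/2)) * su = (2:ℝ) • geomMean (Φ a) (Φ b) (1/2) := by
      rw [conj_smul]; rfl
    have hr : su * (1 + Y) * su = Φ a + su * Y * su := by
      rw [mul_add, add_mul, mul_one, hsusu]
    rw [hl, hr] at hB3
    exact hB3.trans (add_le_add_right hcompress (Φ a))
  have h4 : (2*t) • geomMean (Φ a) (Φ b) (1/2) ≤ t • Φ a + t • Φ b := by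
    calc (2*t) • geomMean (Φ a) (Φ b) (1/2)
        = t • ((2:ℝ) • geomMean (Φ a) (Φ b) (1/2)) := by module
      _ ≤ t • (Φ a + Φ b) := smul_le_smul_of_nonneg_left h3 ht0.le
      _ = t • Φ a + t • Φ b := by module
  -- combine
  rw [hmax]
  have hneg : -Φ (geomMean a b t) ≤ (1-2*t) • Φ b - (2-2*t) • Φ (geomMean a b (1/2)) := by
    rw [neg_le, neg_sub]
    exact sub_le_iff_le_add.mpr h2
  calc geomMean (Φ a) (Φ b) t - Φ (geomMean a b t)
      ≤ ((2*t) • geomMean (Φ a) (Φ b) (1/2) + (1-2*t) • Φ a) - Φ (geomMean a b t) :=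
        sub_le_sub_right h1 _
    _ ≤ ((t • Φ a + t • Φ b) + (1-2*t) • Φ a) - Φ (geomMean a b t) :=
        sub_le_sub_right (add_le_add_left h4 _) _
    _ ≤ ((t • Φ a + t • Φ b) + (1-2*t) • Φ a)
        + ((1-2*t) • Φ b - (2-2*t) • Φ (geomMean a b (1/2))) := by
        rw [sub_eq_add_neg]
        exact add_le_add_right hneg _
    _ = (2 * (1-t)) • (geomMean (Φ a) (Φ b) (1/2) - Φ (geomMean a b (1/2))
          + ((1:ℝ)/2) • (Φ a + Φ b - (2:ℝ) • geomMean (Φ a) (Φ b) (1/2))) := by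
        module
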